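/- arXiv:2404.09369 — 4 statements merged into one kernel-verified Lean document; each statement's English description precedes it below -/
import Mathlib

section
/- Let a, b be vectors in ℝ² with ⟨a, b⟩ = 0 and b ≠ 0. Then there exists σ ∈ ℝ such that a = σ · b^⊥, where b^⊥ = (-b₂, b₁). Consequently, if u is a nonvanishing element of the kernel of (δR_f)*, i.e., satisfying ½ u · dR_f(v) = (Δ_f u) df(v) for all tangent vectors v, then there exists a smooth function σ on Σ such that dR_f = -2σ df and Δ_f u = -σ u. -/
open Matrix MeasureTheory Real

noncomputable section

/-- Scalar fields on the manifold `M`. -/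
abbrev SF (M : Type*) := M → ℝ
/-- Vector fields (≅ one-forms via the metric) expressed in an orthonormal moving frame. -/
abbrev VF (M : Type*) (n : ℕ) := M → Fin n → ℝ
/-- (0,2)-tensor fields expressed in a moving frame. -/
abbrev TF (M : Type*) (n : ℕ) := M → Matrix (Fin n) (Fin n) ℝ

variable {M : Type*} {n : ℕ}

/-- Pointwise metric pairing of two vector fields: `⟨X, Y⟩`. -/
def dotV (X Y : VF M n) : SF M := fun p => X p ⬝ᵥ Y p
/-- Pointwise metric pairing of two symmetric 2-tensors: `⟨A, B⟩ = tr (A B)`. -/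
def pairT (A B : TF M n) : SF M := fun p => (A p * B p).trace
/-- The one-form `A(X, ·)` (identified with a vector field). -/
def appT (A : TF M n) (X : VF M n) : VF M n := fun p => (A p).mulVec (X p)
/-- The trace of a 2-tensor. -/
def trT (A : TF M n) : SF M := fun p => (A p).trace
/-- The Riemannian metric `g` (the identity in an orthonormal frame). -/
def gMet (M : Type*) (n : ℕ) : TF M n := fun _ => (1 : Matrix (Fin n) (Fin n) ℝ)
/-- Multiplication of a 2-tensor by a scalar function. -/
def smulT (u : SF M) (A : TF M n) : TF M n := fun p => u p • A p
/-- Multiplication of a vector field by a scalar function. -/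
def smulV (u : SF M) (X : VF M n) : VF M n := fun p => u p • X p
/-- The pointwise norm `|X|` of a vector field. -/
def normV (X : VF M n) : SF M := fun p => Real.sqrt (X p ⬝ᵥ X p)

/-- The drift Laplacian `Δ_f u = Δu - ⟨∇f, ∇u⟩`. -/
def driftLap (Δ : SF M → SF M) (grad : SF M → VF M n) (f u : SF M) : SF M :=
  Δ u - dotV (grad f) (grad u)
/-- The Bakry–Émery Ricci tensor `Ric_f = Ric + ∇²f`. -/
def RicF (Ric : TF M n) (Hess : SF M → TF M n) (f : SF M) : TF M n := Ric + Hess f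
/-- The Perelman scalar curvature `𝓡_f = R + 2Δf - |∇f|²`. -/
def perelmanR (R : SF M) (Δ : SF M → SF M) (grad : SF M → VF M n) (f : SF M) : SF M :=
  R + 2 • Δ f - dotV (grad f) (grad f)
/-- The weighted divergence of a vector field: `div_f X = div X - ⟨X, ∇f⟩`. -/
def divfV (divV : VF M n → SF M) (grad : SF M → VF M n) (f : SF M) (X : VF M n) : SF M :=
  divV X - dotV X (grad f)
/-- The weighted divergence of a 2-tensor: `div_f A = div A - A(∇f, ·)`. -/
def divfT (divT : TF M n → VF M n) (grad : SF M → VF M n) (f : SF M) (A : TF M n) : VF M n :=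
  divT A - appT A (grad f)
/-- The traceless part `A° = A - (tr A / n) g` of a 2-tensor. -/
def tracelessT (A : TF M n) : TF M n := A - smulT (fun p => trT A p / n) (gMet M n)
/-- `u` lies in the kernel of `(δ𝓡_f)^*`, i.e. `-(Δ_f u) g + ∇²u - u Ric_f = 0`. -/
def PStatic (Δ : SF M → SF M) (grad : SF M → VF M n) (Hess : SF M → TF M n)
    (Ric : TF M n) (f u : SF M) : Prop :=
  smulT (-(driftLap Δ grad f u)) (gMet M n) + Hess u - smulT u (RicF Ric Hess f) = 0

/-! Orthogonality of `a = (d𝓡_f(v), Δ_f u)` and `b = (u, -2 df(v))` is the identity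
`½ u d𝓡_f(v) = (Δ_f u) df(v)`; since `u ≠ 0`, `a` is a multiple of `b^⊥ = (2 df(v), u)`, and the
second coordinate pins the factor down as `Δ_f u / u`, independently of `v`. -/

theorem exists_eq_smul_perp_of_orthogonal {a b : ℝ × ℝ} (hab : a.1 * b.1 + a.2 * b.2 = 0)
    (hb : b ≠ 0) : ∃ σ : ℝ, a = σ • (-b.2, b.1) := by
  have hb2 : b.1 ^ 2 + b.2 ^ 2 ≠ 0 := by
    contrapose! hb
    obtain ⟨h1, h2⟩ := (add_eq_zero_iff_of_nonneg (sq_nonneg _) (sq_nonneg _)).1 hb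
    exact Prod.ext (pow_eq_zero_iff two_ne_zero |>.1 h1) (pow_eq_zero_iff two_ne_zero |>.1 h2)
  refine ⟨(a.2 * b.1 - a.1 * b.2) / (b.1 ^ 2 + b.2 ^ 2), Prod.ext ?_ ?_⟩
  · simp only [Prod.smul_fst, smul_eq_mul]
    field_simp
    linear_combination b.1 * hab
  · simp only [Prod.smul_snd, smul_eq_mul]
    field_simp
    linear_combination b.2 * hab

theorem eq_two_mul_div_mul_of_half_mul_eq {r d u x : ℝ} (hu : u ≠ 0)
    (h : 1 / 2 * u * r = d * x) : r = 2 * (d / u) * x := by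
  obtain ⟨τ, hτ⟩ := exists_eq_smul_perp_of_orthogonal (a := (r, d)) (b := (u, -2 * x))
    (by linear_combination 2 * h) (by simp [hu])
  simp only [Prod.smul_mk, smul_eq_mul, neg_mul, neg_neg, Prod.mk.injEq] at hτ
  obtain ⟨hr, hd⟩ := hτ
  rw [hr, hd, mul_div_cancel_right₀ τ hu]
  ring

/-- the linear algebra fact in ℝ² and its geometric consequence: if `u` is a
nonvanishing element of the kernel of `(δ𝓡_f)^*`, then `d𝓡_f = -2σ df` and `Δ_f u = -σ u`
for some function `σ`. -/
theorem statement5 {M : Type*} {n : ℕ}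
    (Δ : SF M → SF M) (grad : SF M → VF M n) (R f u : SF M)
    (hu : ∀ p, u p ≠ 0)
    -- the identity ½ u d𝓡_f(v) = (Δ_f u) df(v) for all tangent vectors v:
    (hid : ∀ (p : M) (v : Fin n → ℝ),
      (1/2 : ℝ) * u p * (grad (perelmanR R Δ grad f) p ⬝ᵥ v)
        = driftLap Δ grad f u p * (grad f p ⬝ᵥ v)) :
    (∀ a b : ℝ × ℝ, a.1 * b.1 + a.2 * b.2 = 0 → b ≠ 0 →
        ∃ σ : ℝ, a = σ • (-b.2, b.1))
    ∧ ∃ σ : SF M,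
        grad (perelmanR R Δ grad f) = smulV (fun p => -2 * σ p) (grad f)
        ∧ driftLap Δ grad f u = fun p => -(σ p) * u p := by
  refine ⟨fun a b => exists_eq_smul_perp_of_orthogonal,
    fun p => -(driftLap Δ grad f u p / u p), ?_, ?_⟩
  · funext p i
    have h := hid p (Pi.single i 1)
    simp only [dotProduct_single, mul_one] at h
    rw [eq_two_mul_div_mul_of_half_mul_eq (hu p) h]
    simp only [smulV, Pi.smul_apply, smul_eq_mul]
    ring
  · funext p
    simp only [neg_neg, div_mul_cancel₀ _ (hu p)]
end
end

section
/- If u is a positive smooth function in the kernel of (δR_f)*, then Δ_{-ln u} e^{-f} = -e^{-f}(R_f - (n-1)σ), where Δ_{-ln u} w = Δw + ⟨∇ ln u, ∇w⟩ and σ is the function satisfying Δ_f u = -σ u. -/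
open Matrix MeasureTheory Real

noncomputable section

variable {M : Type*} {n : ℕ}

theorem PStatic.trace_eq {Δ : SF M → SF M} {grad : SF M → VF M n} {Hess : SF M → TF M n}
    {Ric : TF M n} {R f u : SF M} (hker : PStatic Δ grad Hess Ric f u)
    (hHu : trT (Hess u) = Δ u) (hHf : trT (Hess f) = Δ f) (hRic : trT Ric = R) (p : M) :
    -(n : ℝ) * driftLap Δ grad f u p + Δ u p - u p * (R p + Δ f p) = 0 := by
  have htr := congrArg Matrix.trace (congrFun hker p)
  simp only [smulT, gMet, RicF, Pi.add_apply, Pi.sub_apply, Pi.neg_apply, Pi.zero_apply,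
    Matrix.trace_add, Matrix.trace_sub, Matrix.trace_smul, Matrix.trace_one, Matrix.trace_zero,
    Fintype.card_fin, smul_eq_mul] at htr
  have hHu' : (Hess u p).trace = Δ u p := congrFun hHu p
  have hHf' : (Hess f p).trace = Δ f p := congrFun hHf p
  have hRic' : (Ric p).trace = R p := congrFun hRic p
  rw [hHu', hHf', hRic'] at htr
  linear_combination htr

theorem PStatic.dotV_grad_grad {Δ : SF M → SF M} {grad : SF M → VF M n}
    {Hess : SF M → TF M n} {Ric : TF M n} {R f u σ : SF M}
    (hker : PStatic Δ grad Hess Ric f u) (hσ : driftLap Δ grad f u = fun p => -(σ p) * u p)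
    (hHu : trT (Hess u) = Δ u) (hHf : trT (Hess f) = Δ f) (hRic : trT Ric = R) (p : M) :
    dotV (grad f) (grad u) p = u p * (R p + Δ f p - ((n : ℝ) - 1) * σ p) := by
  have htr := hker.trace_eq hHu hHf hRic p
  have hΔu : driftLap Δ grad f u p = Δ u p - dotV (grad f) (grad u) p := rfl
  rw [congrFun hσ p] at htr hΔu
  linear_combination htr + hΔu

theorem weightedLap_exp_neg {Δ : SF M → SF M} {grad : SF M → VF M n} {f u : SF M}
    (hgradlog : grad (fun p => Real.log (u p)) = fun p => (u p)⁻¹ • grad u p)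
    (hgradexp : grad (fun p => Real.exp (-(f p))) = fun p => (-Real.exp (-(f p))) • grad f p)
    (hlapexp : Δ (fun p => Real.exp (-(f p)))
        = fun p => Real.exp (-(f p)) * (dotV (grad f) (grad f) p - Δ f p)) (p : M) :
    Δ (fun q => Real.exp (-(f q))) p
        + dotV (grad (fun q => Real.log (u q))) (grad (fun q => Real.exp (-(f q)))) p
      = Real.exp (-(f p))
        * (dotV (grad f) (grad f) p - Δ f p - (u p)⁻¹ * dotV (grad f) (grad u) p) := by
  simp only [hlapexp, hgradexp, hgradlog, dotV, smul_dotProduct, dotProduct_smul, smul_eq_mul,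
    dotProduct_comm (grad u p)]
  ring

/-- if `u > 0` is in the kernel of `(δ𝓡_f)^*`, then
`Δ_{-ln u} e^{-f} = -e^{-f}(𝓡_f - (n-1)σ)` where `Δ_f u = -σ u`. -/
theorem statement6 {M : Type*} {n : ℕ}
    (Δ : SF M → SF M) (grad : SF M → VF M n)
    (Hess : SF M → TF M n) (Ric : TF M n) (R f u σ : SF M)
    (hu : ∀ p, 0 < u p)
    (hker : PStatic Δ grad Hess Ric f u)
    (hσ : driftLap Δ grad f u = fun p => -(σ p) * u p)
    -- trace identities:
    (htrHess : ∀ w : SF M, trT (Hess w) = Δ w)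
    (htrRic : trT Ric = R)
    -- chain rules:
    (hgradlog : grad (fun p => Real.log (u p)) = fun p => (u p)⁻¹ • grad u p)
    (hgradexp : grad (fun p => Real.exp (-(f p)))
        = fun p => (-Real.exp (-(f p))) • grad f p)
    (hlapexp : Δ (fun p => Real.exp (-(f p)))
        = fun p => Real.exp (-(f p)) * (dotV (grad f) (grad f) p - Δ f p)) :
    (fun p => Δ (fun q => Real.exp (-(f q))) p
        + dotV (grad (fun q => Real.log (u q))) (grad (fun q => Real.exp (-(f q)))) p)
      = fun p => -(Real.exp (-(f p))) * (perelmanR R Δ grad f p - ((n : ℝ) - 1) * σ p) := by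
  funext p
  rw [weightedLap_exp_neg hgradlog hgradexp hlapexp,
    hker.dotV_grad_grad hσ (htrHess u) (htrHess f) htrRic, inv_mul_cancel_left₀ (hu p).ne']
  simp only [perelmanR, Pi.add_apply, Pi.sub_apply, Pi.mul_apply, Pi.ofNat_apply, nsmul_eq_mul,
    Nat.cast_ofNat]
  ring
end
end

section
/- On the unit sphere Sⁿ ⊂ ℝⁿ⁺¹ with its round metric and density f(x) = ⟨x, v⟩ for a fixed v ∈ ℝⁿ⁺¹, let w ∈ ℝⁿ⁺¹ with ⟨v, w⟩ = 0 and define u_w(x) = ⟨x, w⟩. Then Δ_f u_w = (-n + f) u_w, Ric_f = (n - 1 - f) g_can, and u_w lies in the kernel of (δR_f)*: -(Δ_f u_w) g + ∇²u_w - u_w · Ric_f = 0. -/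
open Matrix MeasureTheory Real

noncomputable section

variable {M : Type*} {n : ℕ}

/-- on the round sphere `Sⁿ ⊂ ℝⁿ⁺¹` with density `f(x) = ⟨x, v⟩` and
`⟨v, w⟩ = 0`, the function `u_w(x) = ⟨x, w⟩` satisfies `Δ_f u_w = (-n + f) u_w`,
`Ric_f = (n - 1 - f) g`, and lies in the kernel of `(δ𝓡_f)^*`. -/
theorem statement8 {M : Type*} {n : ℕ}
    (Δ : SF M → SF M) (grad : SF M → VF M (n+1))
    (Hess : SF M → TF M (n+1)) (Ric : TF M (n+1))
    (ι : M → Fin (n+1) → ℝ) (v w : Fin (n+1) → ℝ) (G : TF M (n+1)) (f uw : SF M)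
    -- ι is the inclusion Sⁿ ⊂ ℝⁿ⁺¹ and G the round metric (tangential projection):
    (hsph : ∀ p, ι p ⬝ᵥ ι p = 1)
    (hG : G = fun p => 1 - vecMulVec (ι p) (ι p))
    (hvw : v ⬝ᵥ w = 0)
    (hf : f = fun p => ι p ⬝ᵥ v) (huw : uw = fun p => ι p ⬝ᵥ w)
    -- standard facts for restrictions of linear functions to the round sphere:
    (hgradf : grad f = fun p => v - (ι p ⬝ᵥ v) • ι p)
    (hgraduw : grad uw = fun p => w - (ι p ⬝ᵥ w) • ι p)
    (hHessf : Hess f = smulT (-f) G) (hHessuw : Hess uw = smulT (-uw) G)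
    (hΔf : Δ f = fun p => -(n : ℝ) * f p) (hΔuw : Δ uw = fun p => -(n : ℝ) * uw p)
    (hRic : Ric = smulT (fun _ => (n : ℝ) - 1) G) :
    driftLap Δ grad f uw = (fun p => (-(n : ℝ) + f p) * uw p)
    ∧ RicF Ric Hess f = smulT (fun p => (n : ℝ) - 1 - f p) G
    ∧ smulT (-(driftLap Δ grad f uw)) G + Hess uw - smulT uw (RicF Ric Hess f) = 0 := by
  subst hf huw
  have hdot : dotV (grad (fun p => ι p ⬝ᵥ v)) (grad (fun p => ι p ⬝ᵥ w))
      = fun p => -((ι p ⬝ᵥ v) * (ι p ⬝ᵥ w)) := by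
    funext p
    simp only [dotV, hgradf, hgraduw, dotProduct_sub, sub_dotProduct,
      dotProduct_smul, smul_dotProduct, hsph p, hvw, smul_eq_mul]
    rw [dotProduct_comm v (ι p)]
    ring
  have h1 : driftLap Δ grad (fun p => ι p ⬝ᵥ v) (fun p => ι p ⬝ᵥ w)
      = fun p => (-(n:ℝ) + ι p ⬝ᵥ v) * (ι p ⬝ᵥ w) := by
    funext p
    simp only [driftLap, Pi.sub_apply, hΔuw, hdot]
    ring
  refine ⟨h1, ?_, ?_⟩
  · funext p
    simp only [RicF, hRic, hHessf, smulT, Pi.add_apply, Pi.neg_apply, ← add_smul]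
    congr 1
  · funext p
    simp only [h1, hHessuw, RicF, hRic, hHessf, smulT, Pi.add_apply, Pi.sub_apply,
      Pi.neg_apply, Pi.zero_apply, smul_smul, ← add_smul, ← sub_smul]
    rw [show -((-(n:ℝ) + ι p ⬝ᵥ v) * (ι p ⬝ᵥ w)) + -(ι p ⬝ᵥ w)
        - (ι p ⬝ᵥ w) * ((n:ℝ) - 1 + -(ι p ⬝ᵥ v)) = 0 by ring, zero_smul]
end
end

section
/- There is no compact P-singular manifold (Σ, g, e^{-f}dVol, u) with u > 0 in the interior, ∂Σ = u⁻¹(0) nonempty, and Perelman scalar curvature R_f ≥ 0. -/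
open Matrix MeasureTheory Real

noncomputable section

variable {M : Type*} {n : ℕ}

/-- there is no compact P-singular manifold with `u > 0` inside, nonempty
boundary `∂Σ = u⁻¹(0)` and nonnegative Perelman scalar curvature. -/
theorem statement13 {M : Type*} {n : ℕ}
    [TopologicalSpace M] [CompactSpace M] [MeasurableSpace M]
    (vol σm : Measure M)
    (Δ : SF M → SF M) (grad : SF M → VF M n) (divV : VF M n → SF M)
    (Hess : SF M → TF M n) (Ric : TF M n) (R f u : SF M)
    {ι : Type*} [Fintype ι] (Γ : ι → Set M) (κ : ι → ℝ) (ν : VF M n) (B : Set M)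
    (hB : B = {p | u p = 0}) (hBne : B.Nonempty)
    (hcomp : B = ⋃ α, Γ α) (hdisj : Pairwise (Function.onFun Disjoint Γ))
    (hupos : ∀ p, p ∉ B → 0 < u p)
    (hker : PStatic Δ grad Hess Ric f u)
    (hκ : ∀ α, ∀ p ∈ Γ α, normV (grad u) p = κ α)
    -- 0 is a regular value of u, so the surface gravities κ_α are positive:
    (hreg : ∀ p ∈ B, grad u p ≠ 0) (hκpos : ∀ α, 0 < κ α)
    -- each boundary component has positive weighted area:
    (hΓpos : ∀ α, 0 < ∫ p in Γ α, Real.exp (-(f p)) ∂σm)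
    (hν : ∀ p ∈ B, ν p = (-(normV (grad u) p)⁻¹) • grad u p)
    (hσm : σm Bᶜ = 0)
    (htrHess : ∀ w : SF M, trT (Hess w) = Δ w) (htrRic : trT Ric = R)
    (hStokes : ∀ X : VF M n,
      ∫ p, divfV divV grad f X p * Real.exp (-(f p)) ∂vol
        = ∫ p, dotV X ν p * Real.exp (-(f p)) ∂σm)
    -- the boundary area identity of the previous statement:
    (harea : -((n : ℝ) - 1) * ∑ α, κ α * (∫ p in Γ α, Real.exp (-(f p)) ∂σm)
        = ∫ p, perelmanR R Δ grad f p * u p * Real.exp (-(f p)) ∂vol)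
    (hn : 2 ≤ n)
    -- nonnegative Perelman scalar curvature:
    (hRf : ∀ p, 0 ≤ perelmanR R Δ grad f p) :
    False := by
  -- ι is nonempty since B is nonempty and B = ⋃ Γ α
  obtain ⟨p₀, hp₀⟩ := hBne
  rw [hcomp] at hp₀
  obtain ⟨_, ⟨α₀, rfl⟩, _⟩ := hp₀
  haveI : Nonempty ι := ⟨α₀⟩
  -- RHS is nonnegative
  have hRHS : 0 ≤ ∫ p, perelmanR R Δ grad f p * u p * Real.exp (-(f p)) ∂vol := by
    apply integral_nonneg
    intro p
    have hu : 0 ≤ u p := by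
      by_cases hp : p ∈ B
      · rw [hB] at hp; simp [Set.mem_setOf_eq] at hp; simp [hp]
      · exact (hupos p hp).le
    exact mul_nonneg (mul_nonneg (hRf p) hu) (Real.exp_pos _).le
  -- LHS is negative
  have hsum : 0 < ∑ α, κ α * (∫ p in Γ α, Real.exp (-(f p)) ∂σm) :=
    Finset.sum_pos (fun α _ => mul_pos (hκpos α) (hΓpos α)) ⟨α₀, Finset.mem_univ _⟩
  have hn1 : (0:ℝ) < (n : ℝ) - 1 := by
    have : (2:ℝ) ≤ (n:ℝ) := by exact_mod_cast hn
    linarith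
  have hLHS : -((n : ℝ) - 1) * ∑ α, κ α * (∫ p in Γ α, Real.exp (-(f p)) ∂σm) < 0 := by
    have := mul_pos hn1 hsum
    nlinarith
  linarith [harea ▸ hLHS]
end
end
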